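/- arXiv:1911.07209 — 3 statements merged into one kernel-verified Lean document; each statement's English description precedes it below -/
import Mathlib

section
/- For all real x1, x2, the inequality κ·x1·x2·(x1²−x2²)·exp(−(x1²+x2²)/2) ≥ −1 holds for every κ with 0 < κ ≤ e²/8. -/
/-- Positivity bound in Stoyanov's construction: for `0 < κ ≤ e²/8`,
`κ·x1·x2·(x1²−x2²)·exp(−(x1²+x2²)/2) ≥ −1` for all real `x1, x2`. -/
theorem stoyanov_positivity_bound (κ : ℝ) (hκ0 : 0 < κ) (hκ : κ ≤ Real.exp 2 / 8)
    (x1 x2 : ℝ) :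
    κ * x1 * x2 * (x1 ^ 2 - x2 ^ 2) * Real.exp (-(x1 ^ 2 + x2 ^ 2) / 2) ≥ -1 := by
  set s : ℝ := x1 ^ 2 + x2 ^ 2 with hs
  have hs0 : 0 ≤ s := by positivity
  have hE : (0:ℝ) < Real.exp (-s / 2) := Real.exp_pos _
  -- polynomial bound: -(s^2/4) ≤ x1*x2*(x1^2-x2^2)
  have h1 : (x1 * x2 * (x1 ^ 2 - x2 ^ 2)) ^ 2 ≤ (s ^ 2 / 4) ^ 2 := by
    nlinarith [sq_nonneg ((x1 ^ 2 - x2 ^ 2) ^ 2 - 4 * x1 ^ 2 * x2 ^ 2)]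
  have h1' : -(s ^ 2 / 4) ≤ x1 * x2 * (x1 ^ 2 - x2 ^ 2) := by
    nlinarith [sq_nonneg (x1 * x2 * (x1 ^ 2 - x2 ^ 2) + s ^ 2 / 4), sq_nonneg s]
  -- exponential bound: s^2 * exp(-s/2) ≤ 16 / exp 2
  have he1 : s / 4 ≤ Real.exp (s / 4 - 1) := by
    have := Real.add_one_le_exp (s / 4 - 1)
    linarith
  have hexp1 : (0:ℝ) < Real.exp 1 := Real.exp_pos 1
  have hs4 : s ≤ 4 * Real.exp (s / 4) / Real.exp 1 := by
    have h := mul_le_mul_of_nonneg_left he1 (by norm_num : (0:ℝ) ≤ 4)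
    have : Real.exp (s / 4 - 1) = Real.exp (s / 4) / Real.exp 1 := by
      rw [Real.exp_sub]
    rw [this] at h
    linarith [h, (by ring : 4 * (Real.exp (s / 4) / Real.exp 1) = 4 * Real.exp (s / 4) / Real.exp 1)]
  have h2 : s ^ 2 ≤ 16 * Real.exp (s / 2) / Real.exp 2 := by
    have hnn : 0 ≤ 4 * Real.exp (s / 4) / Real.exp 1 := by positivity
    have hsq : s ^ 2 ≤ (4 * Real.exp (s / 4) / Real.exp 1) ^ 2 := by
      nlinarith [hs4, hs0]
    have heq : (4 * Real.exp (s / 4) / Real.exp 1) ^ 2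
        = 16 * Real.exp (s / 2) / Real.exp 2 := by
      have e1 : Real.exp (s / 4) ^ 2 = Real.exp (s / 2) := by
        rw [← Real.exp_nat_mul]; ring_nf
      have e2 : Real.exp 1 ^ 2 = Real.exp 2 := by
        rw [← Real.exp_nat_mul]; norm_num
      field_simp
      nlinarith [e1, e2, Real.exp_pos (s/2), Real.exp_pos 2]
    linarith [hsq, le_of_eq heq]
  have hexp2 : (0:ℝ) < Real.exp 2 := Real.exp_pos 2
  have h3 : s ^ 2 * Real.exp (-s / 2) ≤ 16 / Real.exp 2 := by
    have hmul := mul_le_mul_of_nonneg_right h2 (le_of_lt hE)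
    have : Real.exp (s / 2) * Real.exp (-s / 2) = 1 := by
      rw [← Real.exp_add]; ring_nf; exact Real.exp_zero
    calc s ^ 2 * Real.exp (-s / 2)
        ≤ 16 * Real.exp (s / 2) / Real.exp 2 * Real.exp (-s / 2) := hmul
      _ = 16 / Real.exp 2 * (Real.exp (s / 2) * Real.exp (-s / 2)) := by ring
      _ = 16 / Real.exp 2 := by rw [this]; ring
  -- combine
  have hP : x1 * x2 * (x1 ^ 2 - x2 ^ 2) * Real.exp (-s / 2) ≥ -(4 / Real.exp 2) := by
    have := mul_le_mul_of_nonneg_right h1' (le_of_lt hE)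
    have heqr : -(s ^ 2 / 4) * Real.exp (-s / 2) = -(s ^ 2 * Real.exp (-s / 2)) / 4 := by ring
    linarith [this, (by ring : -(16 / Real.exp 2) / 4 = -(4 / Real.exp 2))]
  have hκ4 : κ * (4 / Real.exp 2) ≤ 1 / 2 := by
    have : κ * (4 / Real.exp 2) ≤ (Real.exp 2 / 8) * (4 / Real.exp 2) := by
      apply mul_le_mul_of_nonneg_right hκ (by positivity)
    calc κ * (4 / Real.exp 2) ≤ (Real.exp 2 / 8) * (4 / Real.exp 2) := this
      _ = 1 / 2 := by field_simp; ring
  have key : κ * (x1 * x2 * (x1 ^ 2 - x2 ^ 2) * Real.exp (-s / 2)) ≥ -(1/2) := by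
    have hmono := mul_le_mul_of_nonneg_left hP (le_of_lt hκ0)
    have : κ * -(4 / Real.exp 2) = -(κ * (4 / Real.exp 2)) := by ring
    linarith [hmono, hκ4, this.ge, this.le]
  have heq : κ * x1 * x2 * (x1 ^ 2 - x2 ^ 2) * Real.exp (-s / 2)
      = κ * (x1 * x2 * (x1 ^ 2 - x2 ^ 2) * Real.exp (-s / 2)) := by ring
  rw [heq]
  linarith [key]
end

section
/- Let φ(x1,x2) = (1/2π)e^{−(x1²+x2²)/2}(1 + κ x1 x2 (x1²−x2²) e^{−(x1²+x2²)/2}) with 0 < κ ≤ e²/8. Then φ is a probability density on ℝ², both of its marginal densities equal the standard normal density, and the random vector (Y1,Y2) with density φ satisfies that Y1+Y2 has the normal distribution with mean 0 and variance 2. -/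
open MeasureTheory ProbabilityTheory Real

namespace StoyanovAux

lemma prod_g (x y : ℝ) :
    gaussianPDFReal 0 1 x * gaussianPDFReal 0 1 y
      = (1 / (2 * π)) * rexp (-(x ^ 2 + y ^ 2) / 2) := by
  have h2π : (0:ℝ) ≤ 2 * π := by positivity
  simp only [gaussianPDFReal, NNReal.coe_one, mul_one, sub_zero]
  rw [show ((√(2*π))⁻¹ * rexp (-x^2/(2:ℝ))) * ((√(2*π))⁻¹ * rexp (-y^2/(2:ℝ)))
      = ((√(2*π))*(√(2*π)))⁻¹ * (rexp (-x^2/2) * rexp (-y^2/2)) by ring]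
  rw [Real.mul_self_sqrt h2π, ← Real.exp_add, one_div]
  ring_nf

lemma key_bound {κ : ℝ} (hκ0 : 0 < κ) (hκ : κ ≤ rexp 2 / 8) (x y : ℝ) :
    |κ * x * y * (x ^ 2 - y ^ 2) * rexp (-(x ^ 2 + y ^ 2) / 2)| ≤ 1 / 2 := by
  set t := x ^ 2 + y ^ 2 with ht
  have ht0 : 0 ≤ t := by positivity
  have habs : |x * y * (x ^ 2 - y ^ 2)| ≤ t ^ 2 / 4 := by
    rw [abs_le]
    constructor
    · nlinarith [sq_nonneg (x^2 - y^2 + 2*x*y)]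
    · nlinarith [sq_nonneg (x^2 - y^2 - 2*x*y)]
  have he : t / 4 ≤ rexp (t / 4 - 1) := by
    have := Real.add_one_le_exp (t / 4 - 1); linarith
  have h2 : t ^ 2 * rexp (-t / 2) ≤ 16 * rexp (-2) := by
    have hexp : rexp (t/4 - 1) * rexp (t/4 - 1) * rexp (-t/2) = rexp (-2) := by
      rw [← Real.exp_add, ← Real.exp_add]; ring_nf
    have h3 : t ^ 2 ≤ 16 * (rexp (t/4-1) * rexp (t/4-1)) := by
      nlinarith [he, ht0, Real.exp_pos (t/4-1)]
    calc t ^ 2 * rexp (-t/2) ≤ 16 * (rexp (t/4-1) * rexp (t/4-1)) * rexp (-t/2) :=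
          mul_le_mul_of_nonneg_right h3 (Real.exp_nonneg _)
      _ = 16 * rexp (-2) := by rw [mul_assoc, hexp]
  have hE : (0:ℝ) ≤ rexp (-t/2) := (Real.exp_pos _).le
  have h4 : |x * y * (x ^ 2 - y ^ 2)| * rexp (-t/2) ≤ 4 * rexp (-2) := by
    calc |x * y * (x ^ 2 - y ^ 2)| * rexp (-t/2) ≤ t^2/4 * rexp (-t/2) :=
          mul_le_mul_of_nonneg_right habs hE
      _ ≤ 4 * rexp (-2) := by linarith
  have hrw : |κ * x * y * (x ^ 2 - y ^ 2) * rexp (-t / 2)|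
      = κ * (|x * y * (x ^ 2 - y ^ 2)| * rexp (-t/2)) := by
    rw [show κ * x * y * (x ^ 2 - y ^ 2) * rexp (-t / 2)
        = κ * ((x * y * (x ^ 2 - y ^ 2)) * rexp (-t/2)) by ring]
    rw [abs_mul, abs_mul, abs_of_pos hκ0, abs_of_nonneg hE]
  rw [hrw]
  have hnn : 0 ≤ |x * y * (x ^ 2 - y ^ 2)| * rexp (-t/2) := by positivity
  calc κ * (|x * y * (x ^ 2 - y ^ 2)| * rexp (-t/2))
      ≤ (rexp 2 / 8) * (4 * rexp (-2)) := by
        apply mul_le_mul hκ h4 hnn (by positivity)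
    _ = (1/2) * (rexp 2 * rexp (-2)) := by ring
    _ = 1/2 := by rw [← Real.exp_add]; norm_num

lemma integral_odd (F : ℝ → ℝ) (hF : ∀ x, F (-x) = -F x) : ∫ x, F x = 0 := by
  have h := integral_neg_eq_self F (volume : Measure ℝ)
  simp_rw [hF, integral_neg] at h
  linarith

lemma conv_g (x : ℝ) :
    (∫ y : ℝ, gaussianPDFReal 0 1 (x - y) * gaussianPDFReal 0 1 y) = gaussianPDFReal 0 2 x := by
  have h1 : ∀ y : ℝ, gaussianPDFReal 0 1 (x - y) * gaussianPDFReal 0 1 y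
      = (1/(2*π)) * rexp (-x^2/4) * rexp (-(y - x/2)^2) := by
    intro y
    rw [prod_g, mul_assoc, ← Real.exp_add]
    congr 1
    ring
  simp_rw [h1]
  rw [MeasureTheory.integral_const_mul]
  have h2 : (∫ y : ℝ, rexp (-(y - x/2)^2)) = Real.sqrt π := by
    rw [show (fun y : ℝ => rexp (-(y - x/2)^2)) = fun y : ℝ => (fun z : ℝ => rexp (-z^2)) (y - x/2) from rfl]
    rw [integral_sub_right_eq_self (fun z : ℝ => rexp (-z^2)) (x/2)]
    have := integral_gaussian 1
    simp only [neg_mul, one_mul, div_one] at this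
    simpa using this
  rw [h2]
  simp only [gaussianPDFReal, sub_zero]
  have h4 : Real.sqrt (2 * π * ((2:NNReal):ℝ)) = 2 * Real.sqrt π := by
    push_cast
    rw [show (2:ℝ) * π * 2 = 2^2 * π by ring, Real.sqrt_mul (by positivity), Real.sqrt_sq (by norm_num)]
  rw [h4]
  have hπ : Real.sqrt π * Real.sqrt π = π := Real.mul_self_sqrt pi_pos.le
  have hsπ : 0 < Real.sqrt π := Real.sqrt_pos.2 pi_pos
  push_cast
  rw [show -x^2/(2*(2:ℝ)) = -x^2/4 by norm_num]
  field_simp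
  nlinarith [hπ, Real.exp_pos (-x^2/4)]

/-- product of two standard gaussian densities -/
noncomputable def fG : ℝ × ℝ → ℝ := fun p => gaussianPDFReal 0 1 p.1 * gaussianPDFReal 0 1 p.2

/-- perturbation term -/
noncomputable def qP (κ : ℝ) : ℝ × ℝ → ℝ := fun p =>
  κ / (2 * π) * (p.1 * p.2 * (p.1 ^ 2 - p.2 ^ 2)) * rexp (-(p.1 ^ 2 + p.2 ^ 2))

lemma fG_nonneg (p : ℝ × ℝ) : 0 ≤ fG p :=
  mul_nonneg (gaussianPDFReal_nonneg _ _ _) (gaussianPDFReal_nonneg _ _ _)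

lemma fG_int : Integrable fG (volume : Measure (ℝ × ℝ)) := by
  rw [Measure.volume_eq_prod]
  exact (integrable_gaussianPDFReal 0 1).mul_prod (integrable_gaussianPDFReal 0 1)

lemma qP_eq (κ : ℝ) (p : ℝ × ℝ) :
    qP κ p = fG p * (κ * p.1 * p.2 * (p.1 ^ 2 - p.2 ^ 2) * rexp (-(p.1 ^ 2 + p.2 ^ 2) / 2)) := by
  obtain ⟨x, y⟩ := p
  simp only [qP, fG, prod_g]
  have hE : rexp (-(x^2+y^2)/2) * rexp (-(x^2+y^2)/2) = rexp (-(x^2+y^2)) := by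
    rw [← Real.exp_add]; ring_nf
  rw [← hE]
  ring

lemma qP_abs_le {κ : ℝ} (hκ0 : 0 < κ) (hκ : κ ≤ rexp 2 / 8) (p : ℝ × ℝ) :
    |qP κ p| ≤ 1/2 * fG p := by
  rw [qP_eq, abs_mul, abs_of_nonneg (fG_nonneg p)]
  calc fG p * |κ * p.1 * p.2 * (p.1 ^ 2 - p.2 ^ 2) * rexp (-(p.1 ^ 2 + p.2 ^ 2) / 2)|
      ≤ fG p * (1/2) := mul_le_mul_of_nonneg_left (key_bound hκ0 hκ _ _) (fG_nonneg p)
    _ = 1/2 * fG p := by ring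

lemma qP_cont (κ : ℝ) : Continuous (qP κ) := by
  unfold qP; fun_prop

lemma qP_int {κ : ℝ} (hκ0 : 0 < κ) (hκ : κ ≤ rexp 2 / 8) :
    Integrable (qP κ) (volume : Measure (ℝ × ℝ)) := by
  refine Integrable.mono (fG_int.const_mul (1/2)) (qP_cont κ).aestronglyMeasurable ?_
  refine Filter.Eventually.of_forall fun p => ?_
  rw [Real.norm_eq_abs, Real.norm_eq_abs, abs_of_nonneg (mul_nonneg (by norm_num) (fG_nonneg p))]
  exact qP_abs_le hκ0 hκ p

lemma split_eq {κ : ℝ} (x y : ℝ) :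
    (1 / (2 * Real.pi)) * Real.exp (-(x ^ 2 + y ^ 2) / 2) *
        (1 + κ * x * y * (x ^ 2 - y ^ 2) * Real.exp (-(x ^ 2 + y ^ 2) / 2))
      = fG (x, y) + qP κ (x, y) := by
  rw [qP_eq]
  simp only [fG, prod_g]
  ring

/-- shear equivalence `(x, y) ↦ (x - y, y)` -/
def shear : ℝ × ℝ ≃ᵐ ℝ × ℝ where
  toEquiv :=
    { toFun := fun p => (p.1 - p.2, p.2)
      invFun := fun p => (p.1 + p.2, p.2)
      left_inv := fun p => by simp
      right_inv := fun p => by simp }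
  measurable_toFun := (measurable_fst.sub measurable_snd).prodMk measurable_snd
  measurable_invFun := (measurable_fst.add measurable_snd).prodMk measurable_snd

end StoyanovAux

open StoyanovAux

/-- Stoyanov's example: `φ` is a probability density on `ℝ²` with standard normal
marginals, and the sum of the coordinates under the law with density `φ` is `N(0,2)`. -/
theorem stoyanov_example (κ : ℝ) (hκ0 : 0 < κ) (hκ : κ ≤ Real.exp 2 / 8)
    (φ : ℝ × ℝ → ℝ)
    (hφ : ∀ p : ℝ × ℝ, φ p =
      (1 / (2 * Real.pi)) * Real.exp (-(p.1 ^ 2 + p.2 ^ 2) / 2) *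
        (1 + κ * p.1 * p.2 * (p.1 ^ 2 - p.2 ^ 2) * Real.exp (-(p.1 ^ 2 + p.2 ^ 2) / 2))) :
    (∀ p, 0 ≤ φ p) ∧
    (∫ p : ℝ × ℝ, φ p = 1) ∧
    (∀ x1 : ℝ, ∫ x2 : ℝ, φ (x1, x2) = gaussianPDFReal 0 1 x1) ∧
    (∀ x2 : ℝ, ∫ x1 : ℝ, φ (x1, x2) = gaussianPDFReal 0 1 x2) ∧
    (Measure.map (fun p : ℝ × ℝ => p.1 + p.2)
        (volume.withDensity (fun p => ENNReal.ofReal (φ p))) = gaussianReal 0 2) := by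
  have hφeq : φ = fun p : ℝ × ℝ => fG p + qP κ p := by
    funext p
    rw [hφ p]
    exact split_eq p.1 p.2
  have hq_int := qP_int hκ0 hκ
  have hφ_int : Integrable φ (volume : Measure (ℝ × ℝ)) := by
    rw [hφeq]; exact fG_int.add hq_int
  -- nonnegativity
  have h_nonneg : ∀ p, 0 ≤ φ p := by
    intro p
    rw [hφ p]
    apply mul_nonneg (by positivity)
    have := key_bound hκ0 hκ p.1 p.2
    have := abs_le.1 this
    linarith [this.1]
  -- marginal in the second variable
  have h_marg1 : ∀ x1 : ℝ, ∫ x2 : ℝ, φ (x1, x2) = gaussianPDFReal 0 1 x1 := by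
    intro x1
    have hint1 : Integrable (fun x2 : ℝ => fG (x1, x2)) volume :=
      (integrable_gaussianPDFReal 0 1).const_mul (gaussianPDFReal 0 1 x1)
    have hint2 : Integrable (fun x2 : ℝ => qP κ (x1, x2)) volume := by
      refine Integrable.mono (hint1.const_mul (1/2))
        (((qP_cont κ).comp (by fun_prop : Continuous fun x2 : ℝ => ((x1, x2) : ℝ × ℝ))).aestronglyMeasurable) ?_
      refine Filter.Eventually.of_forall fun x2 => ?_
      rw [Real.norm_eq_abs, Real.norm_eq_abs,
        abs_of_nonneg (mul_nonneg (by norm_num) (fG_nonneg (x1, x2)))]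
      exact qP_abs_le hκ0 hκ _
    have hodd : ∫ x2 : ℝ, qP κ (x1, x2) = 0 := by
      apply integral_odd
      intro x2
      simp only [qP, neg_sq]
      ring
    calc ∫ x2 : ℝ, φ (x1, x2) = ∫ x2 : ℝ, (fG (x1, x2) + qP κ (x1, x2)) := by rw [hφeq]
      _ = (∫ x2 : ℝ, fG (x1, x2)) + ∫ x2 : ℝ, qP κ (x1, x2) := integral_add hint1 hint2
      _ = gaussianPDFReal 0 1 x1 * (∫ x2 : ℝ, gaussianPDFReal 0 1 x2) + 0 := by
          rw [hodd]; congr 1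
          simp only [fG]
          exact MeasureTheory.integral_const_mul (gaussianPDFReal 0 1 x1) (gaussianPDFReal 0 1)
      _ = gaussianPDFReal 0 1 x1 := by
          rw [integral_gaussianPDFReal_eq_one 0 one_ne_zero]; ring
  -- marginal in the first variable
  have h_marg2 : ∀ x2 : ℝ, ∫ x1 : ℝ, φ (x1, x2) = gaussianPDFReal 0 1 x2 := by
    intro x2
    have hint1 : Integrable (fun x1 : ℝ => fG (x1, x2)) volume :=
      (integrable_gaussianPDFReal 0 1).mul_const (gaussianPDFReal 0 1 x2)
    have hint2 : Integrable (fun x1 : ℝ => qP κ (x1, x2)) volume := by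
      refine Integrable.mono (hint1.const_mul (1/2))
        (((qP_cont κ).comp (by fun_prop : Continuous fun x1 : ℝ => ((x1, x2) : ℝ × ℝ))).aestronglyMeasurable) ?_
      refine Filter.Eventually.of_forall fun x1 => ?_
      rw [Real.norm_eq_abs, Real.norm_eq_abs,
        abs_of_nonneg (mul_nonneg (by norm_num) (fG_nonneg (x1, x2)))]
      exact qP_abs_le hκ0 hκ _
    have hodd : ∫ x1 : ℝ, qP κ (x1, x2) = 0 := by
      apply integral_odd
      intro x1
      simp only [qP, neg_sq]
      ring
    calc ∫ x1 : ℝ, φ (x1, x2) = ∫ x1 : ℝ, (fG (x1, x2) + qP κ (x1, x2)) := by rw [hφeq]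
      _ = (∫ x1 : ℝ, fG (x1, x2)) + ∫ x1 : ℝ, qP κ (x1, x2) := integral_add hint1 hint2
      _ = (∫ x1 : ℝ, gaussianPDFReal 0 1 x1) * gaussianPDFReal 0 1 x2 + 0 := by
          rw [hodd]; congr 1
          simp only [fG]
          exact MeasureTheory.integral_mul_const (gaussianPDFReal 0 1 x2) (gaussianPDFReal 0 1)
      _ = gaussianPDFReal 0 1 x2 := by
          rw [integral_gaussianPDFReal_eq_one 0 one_ne_zero]; ring
  -- total mass
  have h_total : ∫ p : ℝ × ℝ, φ p = 1 := by
    have hφ_int' : Integrable φ ((volume : Measure ℝ).prod volume) := by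
      rw [← Measure.volume_eq_prod]; exact hφ_int
    calc ∫ p : ℝ × ℝ, φ p = ∫ p : ℝ × ℝ, φ p ∂((volume : Measure ℝ).prod volume) := by
          rw [← Measure.volume_eq_prod]
      _ = ∫ x1 : ℝ, ∫ x2 : ℝ, φ (x1, x2) := integral_prod _ hφ_int'
      _ = ∫ x1 : ℝ, gaussianPDFReal 0 1 x1 := by simp_rw [h_marg1]
      _ = 1 := integral_gaussianPDFReal_eq_one 0 one_ne_zero
  refine ⟨h_nonneg, h_total, h_marg1, h_marg2, ?_⟩
  have hsum_meas : Measurable (fun p : ℝ × ℝ => p.1 + p.2) := measurable_fst.add measurable_snd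
  refine Measure.ext fun s hs => ?_
  set A : Set (ℝ × ℝ) := (fun p : ℝ × ℝ => p.1 + p.2) ⁻¹' s with hA_def
  have hA : MeasurableSet A := hsum_meas hs
  rw [Measure.map_apply hsum_meas hs, withDensity_apply _ hA]
  have hL : ∫⁻ p in A, ENNReal.ofReal (φ p) = ENNReal.ofReal (∫ p in A, φ p) :=
    (ofReal_integral_eq_lintegral_ofReal hφ_int.restrict
      (Filter.Eventually.of_forall h_nonneg)).symm
  rw [hL, gaussianReal_apply_eq_integral 0 (by norm_num : (2:NNReal) ≠ 0) s]
  congr 1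
  have hswap : MeasurePreserving Prod.swap (volume : Measure (ℝ × ℝ)) volume := by
    rw [Measure.volume_eq_prod]; exact Measure.measurePreserving_swap
  have hswap_emb : MeasurableEmbedding (Prod.swap : ℝ × ℝ → ℝ × ℝ) :=
    MeasurableEquiv.prodComm.measurableEmbedding
  have hq0 : ∫ p in A, qP κ p = 0 := by
    rw [← integral_indicator hA]
    have key : ∀ p : ℝ × ℝ, A.indicator (qP κ) (Prod.swap p) = - A.indicator (qP κ) p := by
      intro p
      have hmem : Prod.swap p ∈ A ↔ p ∈ A := by
        simp only [hA_def, Set.mem_preimage, Prod.fst_swap, Prod.snd_swap]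
        rw [add_comm]
      by_cases hp : p ∈ A
      · rw [Set.indicator_of_mem (hmem.2 hp), Set.indicator_of_mem hp]
        show qP κ (p.2, p.1) = - qP κ p
        simp only [qP]
        rw [add_comm (p.2 ^ 2) (p.1 ^ 2)]
        ring
      · rw [Set.indicator_of_notMem (fun h => hp (hmem.1 h)), Set.indicator_of_notMem hp,
          neg_zero]
    have h0 : ∫ p, A.indicator (qP κ) p = ∫ p, A.indicator (qP κ) (Prod.swap p) :=
      (hswap.integral_comp hswap_emb _).symm
    simp_rw [key, integral_neg] at h0
    linarith
  have hT : MeasurePreserving (fun p : ℝ × ℝ => (p.1 - p.2, p.2))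
      (volume : Measure (ℝ × ℝ)) volume := by
    rw [Measure.volume_eq_prod]; exact measurePreserving_sub_prod volume volume
  have hT_emb : MeasurableEmbedding (fun p : ℝ × ℝ => (p.1 - p.2, p.2)) :=
    shear.measurableEmbedding
  have hf0 : ∫ p in A, fG p = ∫ x in s, gaussianPDFReal 0 2 x := by
    rw [← integral_indicator hA]
    have h1 : ∫ p, A.indicator fG p = ∫ p : ℝ × ℝ, A.indicator fG (p.1 - p.2, p.2) :=
      (hT.integral_comp hT_emb _).symm
    have h2 : ∀ p : ℝ × ℝ, A.indicator fG (p.1 - p.2, p.2)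
        = Set.indicator s (fun _ => (1:ℝ)) p.1 *
          (gaussianPDFReal 0 1 (p.1 - p.2) * gaussianPDFReal 0 1 p.2) := by
      intro p
      have hmem : (p.1 - p.2, p.2) ∈ A ↔ p.1 ∈ s := by
        simp only [hA_def, Set.mem_preimage]
        rw [sub_add_cancel]
      by_cases hp : p.1 ∈ s
      · rw [Set.indicator_of_mem (hmem.2 hp), Set.indicator_of_mem hp]
        simp [fG]
      · rw [Set.indicator_of_notMem (fun h => hp (hmem.1 h)), Set.indicator_of_notMem hp,
          zero_mul]
    have hint : Integrable (fun p : ℝ × ℝ => A.indicator fG (p.1 - p.2, p.2)) volume := by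
      have h' : Integrable (A.indicator fG) (volume : Measure (ℝ × ℝ)) := fG_int.indicator hA
      exact (hT.integrable_comp_emb hT_emb).2 h'
    have hint' : Integrable (fun p : ℝ × ℝ =>
        Set.indicator s (fun _ => (1:ℝ)) p.1 *
          (gaussianPDFReal 0 1 (p.1 - p.2) * gaussianPDFReal 0 1 p.2))
        ((volume : Measure ℝ).prod volume) := by
      rw [← Measure.volume_eq_prod]
      exact hint.congr (Filter.Eventually.of_forall fun p => h2 p)
    rw [h1]
    simp_rw [h2]
    rw [Measure.volume_eq_prod, integral_prod _ hint']
    have h3 : ∀ x : ℝ, (∫ y : ℝ, Set.indicator s (fun _ => (1:ℝ)) x *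
        (gaussianPDFReal 0 1 (x - y) * gaussianPDFReal 0 1 y))
        = Set.indicator s (gaussianPDFReal 0 2) x := by
      intro x
      rw [MeasureTheory.integral_const_mul, conv_g]
      by_cases hx : x ∈ s <;> simp [hx]
    simp_rw [h3]
    rw [integral_indicator hs]
  have hsplit : ∫ p in A, φ p = (∫ p in A, fG p) + ∫ p in A, qP κ p := by
    rw [hφeq]; exact integral_add fG_int.restrict hq_int.restrict
  rw [hsplit, hq0, hf0, add_zero]
end

section
/- Let Y1,…,Yd have joint law dμ•(𝐫) = H dμ⊗(𝐫) where μ⊗(𝐫) is the product of Meixner laws μ(𝐫1),…,μ(𝐫d) and H has mean square expansion H(x) = Σ_n H_n ∏_i P_{n_i}(x_i;𝐫_i) with Σ_n H_n² ∏_i 𝔥_{n_i}(𝐫_i) < ∞. Then for each j, Y_j has law μ(𝐫_j) if and only if H_{n(j,m)} = 0 for every m ≥ 1, where n(j,m) is the multi-index with m in position j and zeros elsewhere. -/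
open MeasureTheory

/-- A Meixner class of probability laws `μ(𝐫)` on `ℝ`, indexed by the mean–variance
parameter `𝐫`, with orthogonal polynomials `P_n(·;𝐫)`, squared norms `𝔥_n(𝐫)`, and
generating function `e^{x·u(z)}/M(u(z);𝐫) = Σ_n P_n(x;𝐫) zⁿ/n!`. -/
structure MeixnerFamily where
  μ : ℝ × ℝ → Measure ℝ
  P : ℕ → ℝ → ℝ × ℝ → ℝ
  𝔥 : ℕ → ℝ × ℝ → ℝ
  u : ℝ → ℝ
  M : ℝ → ℝ × ℝ → ℝ
  S : Set ℝ
  prob : ∀ r, IsProbabilityMeasure (μ r)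
  S_nhds : S ∈ nhds (0 : ℝ)
  P_meas : ∀ n r, Measurable fun x => P n x r
  P_memL2 : ∀ n r, MemLp (fun x => P n x r) 2 (μ r)
  P_zero : ∀ x r, P 0 x r = 1
  orth : ∀ r m n, ∫ x, P m x r * P n x r ∂(μ r) = if m = n then 𝔥 n r else 0
  𝔥_pos : ∀ n r, 0 < 𝔥 n r
  M_pos : ∀ r, ∀ z ∈ S, 0 < M (u z) r
  M_eq : ∀ r, ∀ z ∈ S, M (u z) r = ∫ x, Real.exp (u z * x) ∂(μ r)
  gen : ∀ r, ∀ z ∈ S, ∀ x : ℝ,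
    HasSum (fun n => P n x r * z ^ n / (n.factorial : ℝ))
      (Real.exp (x * u z) / M (u z) r)
  complete : ∀ r, ∀ g : ℝ → ℝ, Measurable g → MemLp g 2 (μ r) →
    (∀ n, ∫ x, g x * P n x r ∂(μ r) = 0) → g =ᵐ[μ r] 0

/-!
Integrating `H` against `∏ᵢ P_{nᵢ}` with only the `j`-th index nonzero computes the `P_m`-moment
of the `j`-th marginal `ν`: `∫ P_m dν = H_{n(j,m)} 𝔥_m(𝐫_j)`, while `∫ P_m dμ(𝐫_j) = δ_{m0}`.
Since `𝔥_m > 0`, this gives the forward direction. Conversely, integrating out the other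
coordinates exhibits `ν` as `G dμ(𝐫_j)` with `G ∈ L²` (Jensen); if the moments agree, `G - 1` is
orthogonal to every `P_m`, hence vanishes a.e. by completeness of the polynomials.
-/

open scoped ENNReal

section Marginal

variable {α β : Type*} [MeasurableSpace α] [MeasurableSpace β]

lemma integral_withDensity_ofReal {μ : Measure α} {H : α → ℝ} (hH : Measurable H)
    (hH0 : ∀ x, 0 ≤ H x) (g : α → ℝ) :
    ∫ x, g x ∂(μ.withDensity fun x => ENNReal.ofReal (H x)) = ∫ x, H x * g x ∂μ := by
  rw [integral_withDensity_eq_integral_toReal_smul hH.ennreal_ofReal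
    (ae_of_all _ fun _ => ENNReal.ofReal_lt_top)]
  simp only [ENNReal.toReal_ofReal (hH0 _), smul_eq_mul]

lemma MeasurableEquiv.map_withDensity (e : α ≃ᵐ β) (μ : Measure α) (f : α → ℝ≥0∞) :
    (μ.withDensity f).map e = (μ.map e).withDensity (f ∘ e.symm) := by
  ext s hs
  rw [e.map_apply, withDensity_apply _ (e.measurable hs), withDensity_apply _ hs,
    e.restrict_map, lintegral_map_equiv]
  simp

lemma map_fst_prod_withDensity (μ : Measure α) (ν : Measure β) [SFinite μ] [SFinite ν]
    {g : α × β → ℝ≥0∞} (hg : Measurable g) :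
    ((μ.prod ν).withDensity g).map Prod.fst = μ.withDensity fun y => ∫⁻ z, g (y, z) ∂ν := by
  ext s hs
  rw [Measure.map_apply measurable_fst hs, withDensity_apply _ (measurable_fst hs),
    withDensity_apply _ hs, ← Set.prod_univ, ← Measure.restrict_prod_eq_prod_univ,
    lintegral_prod _ hg.aemeasurable]

lemma sq_lintegral_le_lintegral_sq (μ : Measure α) [IsProbabilityMeasure μ]
    {f : α → ℝ≥0∞} (hf : Measurable f) :
    (∫⁻ x, f x ∂μ) ^ 2 ≤ ∫⁻ x, f x ^ 2 ∂μ := by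
  have h := ENNReal.lintegral_mul_le_Lp_mul_Lq μ Real.HolderConjugate.two_two hf.aemeasurable
    (aemeasurable_const (b := 1))
  simp only [Pi.mul_apply, mul_one, ENNReal.one_rpow, lintegral_const, measure_univ] at h
  calc (∫⁻ x, f x ∂μ) ^ 2 ≤ ((∫⁻ x, f x ^ 2 ∂μ) ^ (1 / 2 : ℝ)) ^ 2 := by
        gcongr; exact_mod_cast h
    _ = ∫⁻ x, f x ^ 2 ∂μ := by rw [← ENNReal.rpow_natCast, ← ENNReal.rpow_mul]; norm_num

lemma memLp_two_toReal {μ : Measure α} {f : α → ℝ≥0∞} (hf : Measurable f)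
    (h : ∫⁻ x, f x ^ 2 ∂μ ≠ ∞) : MemLp (fun x => (f x).toReal) 2 μ := by
  rw [memLp_two_iff_integrable_sq hf.ennreal_toReal.aestronglyMeasurable]
  simpa only [ENNReal.toReal_pow] using
    integrable_toReal_of_lintegral_ne_top (hf.pow_const 2).aemeasurable h

lemma exists_memLp_two_map_fst_withDensity (μ : Measure α) (ν : Measure β) [SFinite μ]
    [IsProbabilityMeasure ν] {H : α × β → ℝ} (hH : Measurable H) (hH0 : ∀ p, 0 ≤ H p)
    (hH2 : MemLp H 2 (μ.prod ν)) :
    ∃ G : α → ℝ, Measurable G ∧ (∀ y, 0 ≤ G y) ∧ MemLp G 2 μ ∧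
      ((μ.prod ν).withDensity fun p => ENNReal.ofReal (H p)).map Prod.fst
        = μ.withDensity fun y => ENNReal.ofReal (G y) := by
  set h : α → ℝ≥0∞ := fun y => ∫⁻ z, ENNReal.ofReal (H (y, z)) ∂ν
  have hh : Measurable h := hH.ennreal_ofReal.lintegral_prod_right'
  have hh2 : ∫⁻ y, h y ^ 2 ∂μ ≠ ∞ := by
    refine ne_top_of_le_ne_top ?_ (lintegral_mono fun y =>
      sq_lintegral_le_lintegral_sq ν (hH.ennreal_ofReal.comp measurable_prodMk_left))
    rw [← lintegral_prod (fun p => ENNReal.ofReal (H p) ^ 2)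
      (hH.ennreal_ofReal.pow_const 2).aemeasurable]
    simp_rw [← ENNReal.ofReal_pow (hH0 _)]
    exact hH2.integrable_sq.lintegral_lt_top.ne
  have hfin : ∀ᵐ y ∂μ, h y ≠ ∞ := by
    filter_upwards [ae_lt_top (hh.pow_const 2) hh2] with y hy
    exact ((ENNReal.pow_lt_top_iff.1 hy).resolve_right two_ne_zero).ne
  refine ⟨fun y => (h y).toReal, hh.ennreal_toReal, fun _ => ENNReal.toReal_nonneg,
    memLp_two_toReal hh hh2, ?_⟩
  rw [map_fst_prod_withDensity μ ν hH.ennreal_ofReal]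
  refine withDensity_congr_ae ?_
  filter_upwards [hfin] with y hy
  exact (ENNReal.ofReal_toReal hy).symm

lemma exists_memLp_two_map_eval_pi_withDensity {n : ℕ} {X : Fin (n + 1) → Type*}
    [∀ i, MeasurableSpace (X i)] (μ : ∀ i, Measure (X i)) [∀ i, IsProbabilityMeasure (μ i)]
    (j : Fin (n + 1)) {H : (∀ i, X i) → ℝ} (hH : Measurable H) (hH0 : ∀ x, 0 ≤ H x)
    (hH2 : MemLp H 2 (Measure.pi μ)) :
    ∃ G : X j → ℝ, Measurable G ∧ (∀ y, 0 ≤ G y) ∧ MemLp G 2 (μ j) ∧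
      ((Measure.pi μ).withDensity fun x => ENNReal.ofReal (H x)).map (fun x => x j)
        = (μ j).withDensity fun y => ENNReal.ofReal (G y) := by
  let e := MeasurableEquiv.piFinSuccAbove X j
  have he := measurePreserving_piFinSuccAbove μ j
  obtain ⟨G, hG, hG0, hG2, hmap⟩ := exists_memLp_two_map_fst_withDensity (μ j)
    (Measure.pi fun i => μ (j.succAbove i)) (hH.comp e.symm.measurable) (fun _ => hH0 _)
    (hH2.comp_measurePreserving he.symm)
  refine ⟨G, hG, hG0, hG2, ?_⟩
  have heval : (fun x : ∀ i, X i => x j) = Prod.fst ∘ e := rfl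
  rw [heval, ← Measure.map_map measurable_fst e.measurable, e.map_withDensity, he.map_eq]
  exact hmap

end Marginal

lemma Fintype.prod_apply_pi_single {ι M : Type*} [Fintype ι] [DecidableEq ι] [CommMonoid M]
    (g : ι → ℕ → M) (hg : ∀ i, g i 0 = 1) (j : ι) (n : ℕ) :
    ∏ i, g i ((Pi.single j n : ι → ℕ) i) = g j n := by
  rw [Fintype.prod_eq_single j fun i hi => by rw [Pi.single_eq_of_ne hi, hg], Pi.single_eq_same]

namespace MeixnerFamily

variable (MF : MeixnerFamily)

instance isProbabilityMeasure_μ (p : ℝ × ℝ) : IsProbabilityMeasure (MF.μ p) := MF.prob p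

lemma 𝔥_zero (p : ℝ × ℝ) : MF.𝔥 0 p = 1 := by
  have h := MF.orth p 0 0
  simp only [MF.P_zero, mul_one, if_true, integral_const, probReal_univ, smul_eq_mul] at h
  exact h.symm

lemma integral_P (n : ℕ) (p : ℝ × ℝ) :
    ∫ x, MF.P n x p ∂(MF.μ p) = if n = 0 then 1 else 0 := by
  have h := MF.orth p 0 n
  simp only [MF.P_zero, one_mul] at h
  rw [h]
  rcases n with _ | n
  · rw [if_pos rfl, if_pos rfl, MF.𝔥_zero]
  · rw [if_neg (Nat.succ_ne_zero n).symm, if_neg (Nat.succ_ne_zero n)]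

lemma eq_of_integral_P_eq {p : ℝ × ℝ} {ν : Measure ℝ} {G : ℝ → ℝ} (hG : Measurable G)
    (hG0 : ∀ y, 0 ≤ G y) (hG2 : MemLp G 2 (MF.μ p))
    (hν : ν = (MF.μ p).withDensity fun y => ENNReal.ofReal (G y))
    (hmoment : ∀ n, ∫ y, MF.P n y p ∂ν = ∫ y, MF.P n y p ∂(MF.μ p)) :
    ν = MF.μ p := by
  have hG1 : (fun y => G y - 1) =ᵐ[MF.μ p] 0 := by
    refine MF.complete p _ (hG.sub measurable_const) (hG2.sub (memLp_const 1)) fun n => ?_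
    have hGP : Integrable (fun y => G y * MF.P n y p) (MF.μ p) :=
      hG2.integrable_mul (MF.P_memL2 n p)
    simp_rw [sub_mul, one_mul]
    rw [integral_sub hGP ((MF.P_memL2 n p).integrable one_le_two),
      ← integral_withDensity_ofReal hG hG0, ← hν, hmoment n, sub_self]
  calc ν = (MF.μ p).withDensity 1 := by
        rw [hν]
        refine withDensity_congr_ae ?_
        filter_upwards [hG1] with y hy
        simp [sub_eq_zero.1 hy]
    _ = MF.μ p := withDensity_one

end MeixnerFamily

/-- Matching-marginals criterion (Theorem 2(1)): with joint law `dμ• = H dμ⊗` and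
mean-square expansion coefficients `H_n`, the `j`-th marginal of `μ•` equals `μ(𝐫_j)`
iff `H_{n(j,m)} = 0` for all `m ≥ 1`. -/
theorem meixner_matching_marginals
    (MF : MeixnerFamily) (d : ℕ) (r : Fin d → ℝ × ℝ)
    (H : (Fin d → ℝ) → ℝ) (hHmeas : Measurable H) (hHnn : ∀ x, 0 ≤ H x)
    (hHL2 : MemLp H 2 (Measure.pi fun i => MF.μ (r i)))
    (Hc : (Fin d → ℕ) → ℝ)
    (hcoef : ∀ n : Fin d → ℕ,
      ∫ x, H x * ∏ i, MF.P (n i) (x i) (r i) ∂(Measure.pi fun i => MF.μ (r i))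
        = Hc n * ∏ i, MF.𝔥 (n i) (r i))
    (hone : Hc (fun _ => 0) = 1) :
    ∀ j : Fin d,
      (Measure.map (fun x : Fin d → ℝ => x j)
          ((Measure.pi fun i => MF.μ (r i)).withDensity fun x => ENNReal.ofReal (H x))
        = MF.μ (r j))
      ↔ (∀ m : ℕ, 1 ≤ m → Hc (Pi.single j m) = 0) := by
  intro j
  obtain ⟨d, rfl⟩ : ∃ d', d = d' + 1 := ⟨d - 1, by have := j.pos; omega⟩
  have hmoment : ∀ n, ∫ y, MF.P n y (r j)
      ∂(((Measure.pi fun i => MF.μ (r i)).withDensity fun x => ENNReal.ofReal (H x)).map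
        (fun x => x j)) = Hc (Pi.single j n) * MF.𝔥 n (r j) := fun n => by
    rw [integral_map (measurable_pi_apply j).aemeasurable
      (MF.P_meas n (r j)).aestronglyMeasurable, integral_withDensity_ofReal hHmeas hHnn,
      ← Fintype.prod_apply_pi_single (fun i k => MF.𝔥 k (r i)) (fun i => MF.𝔥_zero _), ← hcoef]
    congr 1 with x
    rw [Fintype.prod_apply_pi_single (fun i k => MF.P k (x i) (r i)) fun i => MF.P_zero _ _]
  constructor
  · intro hν m hm
    have h := hmoment m
    rw [hν, MF.integral_P, if_neg (by omega)] at h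
    exact (mul_eq_zero.1 h.symm).resolve_right (MF.𝔥_pos m (r j)).ne'
  · intro hz
    obtain ⟨G, hG, hG0, hG2, hmap⟩ :=
      exists_memLp_two_map_eval_pi_withDensity _ j hHmeas hHnn hHL2
    refine MF.eq_of_integral_P_eq hG hG0 hG2 hmap fun n => ?_
    rw [hmoment, MF.integral_P]
    rcases n.eq_zero_or_pos with rfl | hn
    · rw [if_pos rfl, Pi.single_zero, MF.𝔥_zero, mul_one]
      exact hone
    · rw [hz n hn, zero_mul, if_neg hn.ne']
end
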